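/- arXiv:1803.09099 — 3 statements merged into one kernel-verified Lean document; each statement's English description precedes it below -/
import Mathlib

section
/- Selection is associative up to evaluation: for every signature Σ, BTL expressions α, β, γ, state Δ, and result δ, eval Sel{α+Sel{β+γ}} Δ δ holds iff eval Sel{Sel{α+β}+γ} Δ δ holds. -/
/-- Positive linear logic formulas: atoms, the unit 1, and tensor. -/
inductive PosForm (A : Type) : Type where
  | atom : A → PosForm A
  | one : PosForm A
  | tensor : PosForm A → PosForm A → PosForm A

/-- The multiset of atoms occurring in a positive formula. -/
def PosForm.atoms {A : Type} : PosForm A → Multiset A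
  | .atom a => {a}
  | .one => 0
  | .tensor S T => S.atoms + T.atoms

/-- BTL expressions over atoms `A` and operator names `Op`. -/
inductive BTL (A Op : Type) : Type where
  | op : Op → BTL A Op                      -- atomic action
  | cond : PosForm A → BTL A Op → BTL A Op  -- ?S.α
  | skip : BTL A Op                         -- Seq{} (empty sequence)
  | seq : BTL A Op → BTL A Op → BTL A Op    -- Seq{α;α'}
  | sel : BTL A Op → BTL A Op → BTL A Op    -- Sel{α+α'}
  | abort : BTL A Op                        -- ⊥
  | rep : BTL A Op → BTL A Op               -- Repeat{α}

/-- Big-step evaluation of BTL expressions. A result is `some Δ'` (success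
with new world state `Δ'`) or `none` (FAIL). A signature `Sig` assigns to
each operator name an action spec `S ⊸ S'`, given by the pair `(S, S')`. -/
inductive Eval {A Op : Type} [DecidableEq A] (Sig : Op → PosForm A × PosForm A) :
    BTL A Op → Multiset A → Option (Multiset A) → Prop where
  | op_succ {o : Op} {Δ : Multiset A} (h : (Sig o).1.atoms ≤ Δ) :
      Eval Sig (.op o) Δ (some (Δ - (Sig o).1.atoms + (Sig o).2.atoms))
  | op_fail {o : Op} {Δ : Multiset A} (h : ¬ (Sig o).1.atoms ≤ Δ) :
      Eval Sig (.op o) Δ none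
  | cond_succ {S : PosForm A} {α Δ δ} (h : S.atoms ≤ Δ) (he : Eval Sig α Δ δ) :
      Eval Sig (.cond S α) Δ δ
  | cond_fail {S : PosForm A} {α Δ} (h : ¬ S.atoms ≤ Δ) :
      Eval Sig (.cond S α) Δ none
  | skip {Δ} : Eval Sig .skip Δ (some Δ)
  | seq_succ {α α' Δ Δ' δ} (h1 : Eval Sig α Δ (some Δ')) (h2 : Eval Sig α' Δ' δ) :
      Eval Sig (.seq α α') Δ δ
  | seq_fail {α α' Δ} (h : Eval Sig α Δ none) : Eval Sig (.seq α α') Δ none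
  | abort {Δ} : Eval Sig .abort Δ none
  | sel_succ {α α' Δ Δ'} (h : Eval Sig α Δ (some Δ')) :
      Eval Sig (.sel α α') Δ (some Δ')
  | sel_fail {α α' Δ δ} (h1 : Eval Sig α Δ none) (h2 : Eval Sig α' Δ δ) :
      Eval Sig (.sel α α') Δ δ
  | rep_succ {α Δ Δ' δ} (h1 : Eval Sig α Δ (some Δ')) (h2 : Eval Sig (.rep α) Δ' δ) :
      Eval Sig (.rep α) Δ δ
  | rep_fail {α Δ} (h : Eval Sig α Δ none) : Eval Sig (.rep α) Δ (some Δ)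

/-- Selection is associative up to evaluation. -/
theorem sel_assoc_eval {A Op : Type} [Countable A] [DecidableEq A]
    (Sig : Op → PosForm A × PosForm A) (α β γ : BTL A Op)
    (Δ : Multiset A) (δ : Option (Multiset A)) :
    Eval Sig (.sel α (.sel β γ)) Δ δ ↔ Eval Sig (.sel (.sel α β) γ) Δ δ := by
  constructor
  · intro h
    cases h with
    | sel_succ h => exact .sel_succ (.sel_succ h)
    | sel_fail h1 h2 =>
      cases h2 with
      | sel_succ h => exact .sel_succ (.sel_fail h1 h)
      | sel_fail h2a h2b => exact .sel_fail (.sel_fail h1 h2a) h2b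
  · intro h
    cases h with
    | sel_succ h =>
      cases h with
      | sel_succ h => exact .sel_succ h
      | sel_fail h1 h2 => exact .sel_fail h1 (.sel_succ h2)
    | sel_fail h1 h2 =>
      cases h1 with
      | sel_fail h1a h1b => exact .sel_fail h1a (.sel_fail h1b h2)
end

section
/- Sequencing distributes over selection on the left, up to evaluation: for every signature Σ, BTL expressions α, β, γ, state Δ, and result δ, eval Seq{α;Sel{β+γ}} Δ δ holds iff eval Sel{Seq{α;β}+Seq{α;γ}} Δ δ holds. -/
theorem Eval.deterministic {A Op : Type} [DecidableEq A]
    {Sig : Op → PosForm A × PosForm A} {α : BTL A Op} {Δ : Multiset A}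
    {δ δ' : Option (Multiset A)} (h : Eval Sig α Δ δ) (h' : Eval Sig α Δ δ') :
    δ = δ' := by
  induction h generalizing δ' with
  | op_succ h => cases h' with
    | op_succ => rfl
    | op_fail h2 => exact absurd h h2
  | op_fail h => cases h' with
    | op_succ h2 => exact absurd h2 h
    | op_fail => rfl
  | cond_succ h he ih => cases h' with
    | cond_succ _ he2 => exact ih he2
    | cond_fail h2 => exact absurd h h2
  | cond_fail h => cases h' with
    | cond_succ h2 => exact absurd h2 h
    | cond_fail => rfl
  | skip => cases h'; rfl
  | seq_succ h1 h2 ih1 ih2 => cases h' with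
    | seq_succ g1 g2 => cases ih1 g1; exact ih2 g2
    | seq_fail g => cases ih1 g
  | seq_fail h ih => cases h' with
    | seq_succ g1 _ => cases ih g1
    | seq_fail => rfl
  | abort => cases h'; rfl
  | sel_succ h ih => cases h' with
    | sel_succ g => exact ih g
    | sel_fail g1 _ => cases ih g1
  | sel_fail h1 h2 ih1 ih2 => cases h' with
    | sel_succ g => cases ih1 g
    | sel_fail g1 g2 => exact ih2 g2
  | rep_succ h1 h2 ih1 ih2 => cases h' with
    | rep_succ g1 g2 => cases ih1 g1; exact ih2 g2
    | rep_fail g => cases ih1 g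
  | rep_fail h ih => cases h' with
    | rep_succ g1 _ => cases ih g1
    | rep_fail => rfl

/-- Sequencing distributes over selection on the left, up to evaluation. -/
theorem seq_sel_distrib_left {A Op : Type} [Countable A] [DecidableEq A]
    (Sig : Op → PosForm A × PosForm A) (α β γ : BTL A Op)
    (Δ : Multiset A) (δ : Option (Multiset A)) :
    Eval Sig (.seq α (.sel β γ)) Δ δ ↔
      Eval Sig (.sel (.seq α β) (.seq α γ)) Δ δ := by
  constructor
  · intro h
    cases h with
    | seq_succ h1 h2 =>
      cases h2 with
      | sel_succ g => exact .sel_succ (.seq_succ h1 g)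
      | sel_fail g1 g2 => exact .sel_fail (.seq_succ h1 g1) (.seq_succ h1 g2)
    | seq_fail h => exact .sel_fail (.seq_fail h) (.seq_fail h)
  · intro h
    cases h with
    | sel_succ g =>
      cases g with
      | seq_succ g1 g2 => exact .seq_succ g1 (.sel_succ g2)
    | sel_fail g1 g2 =>
      cases g1 with
      | seq_succ h1 hb =>
        cases g2 with
        | seq_succ h1' hc =>
          cases h1.deterministic h1'
          exact .seq_succ h1 (.sel_fail hb hc)
        | seq_fail hf => cases h1.deterministic hf
      | seq_fail hf =>
        cases g2 with
        | seq_succ h1' _ => cases hf.deterministic h1'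
        | seq_fail _ => exact .seq_fail hf
end

section
/- In the Doors signature, the BTL expression α = Seq{open_door; walk_to_door} evaluates from the state Δ = {at_elsewhere, door_unlocked} to FAIL; in particular, there is no state Δ' such that eval α Δ Δ' holds (so the naive commutative tensor typing rule for sequences, which would assign α the type (at_door ⊗ door_unlocked ⊸ door_open) ⊗ (at_elsewhere ⊸ at_door), is unsound with respect to evaluation). -/
/-- Atoms of the Doors world. -/
inductive DAtom : Type where
  | at_elsewhere | at_door | door_unlocked | door_open | door_locked | through_door
  deriving DecidableEq

/-- Operator names of the Doors world. -/
inductive DOp : Type where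
  | walk_to_door | pass_through | open_door | smash_door | close_door
  deriving DecidableEq

/-- The Doors signature. -/
def doorSig : DOp → PosForm DAtom × PosForm DAtom
  | .walk_to_door => (.atom .at_elsewhere, .atom .at_door)
  | .pass_through =>
      (.tensor (.atom .door_open) (.atom .at_door),
       .tensor (.atom .door_open) (.atom .through_door))
  | .open_door =>
      (.tensor (.atom .door_unlocked) (.atom .at_door),
       .tensor (.atom .door_open) (.atom .at_door))
  | .smash_door =>
      (.tensor (.atom .door_locked) (.atom .at_door),
       .tensor (.atom .door_open) (.atom .at_door))
  | .close_door =>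
      (.tensor (.atom .door_open) (.atom .through_door),
       .tensor (.atom .door_unlocked) (.atom .through_door))

/-- `Seq{open_door; walk_to_door}` evaluates from `{at_elsewhere, door_unlocked}`
to FAIL, and in particular evaluates to no state `Δ'`. -/
theorem doors_bad_sequence_fails :
    Eval doorSig (.seq (.op .open_door) (.op .walk_to_door))
      ({DAtom.at_elsewhere, DAtom.door_unlocked} : Multiset DAtom) none ∧
    ¬ ∃ Δ' : Multiset DAtom,
        Eval doorSig (.seq (.op .open_door) (.op .walk_to_door))
          ({DAtom.at_elsewhere, DAtom.door_unlocked} : Multiset DAtom) (some Δ') := by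
  have hnot : ¬ (doorSig .open_door).1.atoms ≤
      ({DAtom.at_elsewhere, DAtom.door_unlocked} : Multiset DAtom) := by decide
  refine ⟨Eval.seq_fail (Eval.op_fail hnot), ?_⟩
  rintro ⟨Δ', h⟩
  cases h with
  | seq_succ h1 _ => cases h1 with | op_succ h => exact hnot h
end
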